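/- Let (X,G) be a complete G-metric space and let T : X → X satisfy G(Tx,Ty,Tz) ≤ α·G(x,y,z) + β·max{G(x,Tx,Tx), G(y,Ty,Ty), G(z,Tz,Tz)} for all x,y,z ∈ X, where α,β are nonnegative real numbers with α + β < 1. Then T has a unique fixed point u ∈ X (Tu = u), and T is G-continuous at u. -/

import Mathlib

open Filter Topology

/-- A G-metric on a set `X` (Mustafa–Sims). The symmetry axiom (G5) is recorded via
the two generating permutations (swap of last two arguments and a cyclic shift),
from which all six equalities of (G5) follow. -/
structure GMetricStruct (X : Type*) where
  G : X → X → X → ℝ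
  nonneg : ∀ x y z, 0 ≤ G x y z
  eq_zero_of_eq : ∀ x y z, x = y → y = z → G x y z = 0
  pos_of_ne : ∀ x y, x ≠ y → 0 < G x x y
  le_of_ne : ∀ x y z, z ≠ y → G x x y ≤ G x y z
  symm_swap : ∀ x y z, G x y z = G x z y
  symm_cycle : ∀ x y z, G x y z = G y z x
  rect : ∀ x y z a, G x y z ≤ G x a a + G a y z

/-- A convex structure `W` on a G-metric space `(X, G)`:
for all `x, y, u, v` and `λ, β ∈ [0,1]` with `λ + β = 1`,
`G(W(x,y;λ,β), u, v) ≤ λ·G(x,u,v) + β·G(y,u,v)`. -/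
def IsConvexStructure {X : Type*} (GM : GMetricStruct X) (W : X → X → ℝ → ℝ → X) : Prop :=
  ∀ x y u v : X, ∀ lam beta : ℝ, lam ∈ Set.Icc (0:ℝ) 1 → beta ∈ Set.Icc (0:ℝ) 1 →
    lam + beta = 1 →
    GM.G (W x y lam beta) u v ≤ lam * GM.G x u v + beta * GM.G y u v

/-- A sequence `x` G-converges to `l` iff `G(x_n, x_n, l) → 0`. -/
def GConvergesTo {X : Type*} (GM : GMetricStruct X) (x : ℕ → X) (l : X) : Prop :=
  Tendsto (fun n => GM.G (x n) (x n) l) atTop (𝓝 0)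

/-- A sequence `x` is G-Cauchy iff `G(x_n, x_m, x_l) → 0` as `n, m, l → ∞`. -/
def GCauchySeq {X : Type*} (GM : GMetricStruct X) (x : ℕ → X) : Prop :=
  ∀ ε : ℝ, 0 < ε → ∃ N : ℕ, ∀ n ≥ N, ∀ m ≥ N, ∀ l ≥ N, GM.G (x n) (x m) (x l) < ε

/-- A G-metric space is complete iff every G-Cauchy sequence G-converges. -/
def GComplete {X : Type*} (GM : GMetricStruct X) : Prop :=
  ∀ x : ℕ → X, GCauchySeq GM x → ∃ l : X, GConvergesTo GM x l

/-- `T` is G-continuous at `u` iff it maps sequences G-converging to `u`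
to sequences G-converging to `T u`. -/
def GContinuousAt {X : Type*} (GM : GMetricStruct X) (T : X → X) (u : X) : Prop :=
  ∀ y : ℕ → X, GConvergesTo GM y u → GConvergesTo GM (fun n => T (y n)) (T u)

/-!
The Picard orbit `xₙ₊₁ = T xₙ` has steps `G(xₙ, xₙ₊₁, xₙ₊₁) ≤ (α + β)ⁿ G(x₀, x₁, x₁)`, since
on the triple `(x, Tx, Tx)` the max-term is either the previous or the next step. Summing the
geometric series makes the orbit G-Cauchy. At its limit `u` the max-term tends to
`G(u, Tu, Tu)`, leaving `G(u, Tu, Tu) ≤ β G(u, Tu, Tu)`, so `Tu = u`. Uniqueness and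
G-continuity at `u` follow by putting `u` into the contraction inequality once more.
-/

open Filter Topology Finset

namespace GMetricStruct

variable {X : Type*} (GM : GMetricStruct X)

theorem G_self (x : X) : GM.G x x x = 0 :=
  GM.eq_zero_of_eq x x x rfl rfl

theorem G_xxy_le_two_mul_G_xyy (x y : X) : GM.G x x y ≤ 2 * GM.G x y y := by
  have hyxy : GM.G y x y = GM.G x y y := (GM.symm_swap y x y).trans (GM.symm_cycle x y y).symm
  linarith [GM.rect x x y y]

theorem G_xyy_le_two_mul_G_xxy (x y : X) : GM.G x y y ≤ 2 * GM.G x x y := by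
  have := GM.G_xxy_le_two_mul_G_xyy y x
  rwa [← GM.symm_cycle x y y, GM.symm_cycle y x x] at this

theorem eq_of_G_xyy_eq_zero {x y : X} (h : GM.G x y y = 0) : x = y := by
  by_contra hne
  have := GM.pos_of_ne x y hne
  have := GM.G_xxy_le_two_mul_G_xyy x y
  linarith

theorem G_le_add_add (x y z a : X) :
    GM.G x y z ≤ GM.G x a a + GM.G y a a + GM.G z a a := by
  have haza : GM.G a z a = GM.G z a a := ((GM.symm_cycle z a a).trans (GM.symm_swap a a z)).symm
  linarith [GM.rect x y z a, GM.symm_cycle a y z, GM.rect y z a a]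

theorem G_le_sum_Ico (x : ℕ → X) {n m : ℕ} (hnm : n ≤ m) :
    GM.G (x n) (x m) (x m) ≤ ∑ k ∈ Ico n m, GM.G (x k) (x (k + 1)) (x (k + 1)) := by
  induction m, hnm using Nat.le_induction with
  | base => simp [G_self]
  | succ m hnm ih =>
    rw [sum_Ico_succ_top hnm]
    linarith [GM.rect (x n) (x (m + 1)) (x (m + 1)) (x m)]

variable {GM}

theorem gCauchySeq_of_G_le {x : ℕ → X} {b : ℕ → ℝ} (hb : Tendsto b atTop (𝓝 0))
    (h : ∀ N n, N ≤ n → GM.G (x N) (x n) (x n) ≤ b N) : GCauchySeq GM x := by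
  intro ε hε
  obtain ⟨N, hN⟩ := (hb.eventually (gt_mem_nhds (div_pos hε (by norm_num : (0 : ℝ) < 6)))).exists
  refine ⟨N, fun n hn m hm l hl => ?_⟩
  have hfar : ∀ k, N ≤ k → GM.G (x k) (x N) (x N) ≤ 2 * b N := fun k hk => by
    have := GM.G_xyy_le_two_mul_G_xxy (x k) (x N)
    rw [← GM.symm_cycle (x N) (x k) (x k)] at this
    linarith [h N k hk]
  linarith [GM.G_le_add_add (x n) (x m) (x l) (x N), hfar n hn, hfar m hm, hfar l hl]

theorem gCauchySeq_of_G_succ_le_geometric {x : ℕ → X} {C r : ℝ} (hr0 : 0 ≤ r) (hr1 : r < 1)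
    (h : ∀ n, GM.G (x n) (x (n + 1)) (x (n + 1)) ≤ C * r ^ n) : GCauchySeq GM x := by
  have hC : 0 ≤ C := by simpa using (GM.nonneg _ _ _).trans (h 0)
  refine gCauchySeq_of_G_le (b := fun N => C * (r ^ N / (1 - r))) ?_ fun N n hNn => ?_
  · simpa using ((tendsto_pow_atTop_nhds_zero_of_lt_one hr0 hr1).div_const (1 - r)).const_mul C
  · calc GM.G (x N) (x n) (x n)
        ≤ ∑ k ∈ Ico N n, GM.G (x k) (x (k + 1)) (x (k + 1)) := GM.G_le_sum_Ico x hNn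
      _ ≤ ∑ k ∈ Ico N n, C * r ^ k := sum_le_sum fun k _ => h k
      _ ≤ C * (r ^ N / (1 - r)) := by
        rw [← mul_sum]
        exact mul_le_mul_of_nonneg_left (geom_sum_Ico_le_of_lt_one hr0 hr1) hC

end GMetricStruct

namespace GConvergesTo

variable {X : Type*} {GM : GMetricStruct X} {x : ℕ → X} {u : X}

theorem tendsto_G_lim_seq_seq (hx : GConvergesTo GM x u) :
    Tendsto (fun n => GM.G u (x n) (x n)) atTop (𝓝 0) :=
  hx.congr fun n => (GM.symm_cycle u (x n) (x n)).symm

theorem tendsto_G_seq_lim_lim (hx : GConvergesTo GM x u) :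
    Tendsto (fun n => GM.G (x n) u u) atTop (𝓝 0) := by
  refine squeeze_zero (fun n => GM.nonneg _ _ _) (fun n => ?_) (by simpa using hx.const_mul 2)
  exact GM.G_xyy_le_two_mul_G_xxy (x n) u

theorem tendsto_G_succ (hx : GConvergesTo GM x u) :
    Tendsto (fun n => GM.G (x n) (x (n + 1)) (x (n + 1))) atTop (𝓝 0) := by
  refine squeeze_zero (fun n => GM.nonneg _ _ _) (fun n => GM.rect _ _ _ u) ?_
  simpa using hx.tendsto_G_seq_lim_lim.add
    (hx.tendsto_G_lim_seq_seq.comp (tendsto_add_atTop_nat 1))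

end GConvergesTo

open GMetricStruct Function

def IsMaxContraction {X : Type*} (GM : GMetricStruct X) (T : X → X) (a β : ℝ) : Prop :=
  ∀ x y z : X, GM.G (T x) (T y) (T z) ≤
    a * GM.G x y z + β * max (GM.G x (T x) (T x)) (max (GM.G y (T y) (T y)) (GM.G z (T z) (T z)))

namespace IsMaxContraction

variable {X : Type*} {GM : GMetricStruct X} {T : X → X} {a β : ℝ}

theorem G_apply_le (hT : IsMaxContraction GM T a β) (ha : 0 ≤ a) (hβ : 0 ≤ β) (hab : a + β < 1)
    (x : X) :
    GM.G (T x) (T (T x)) (T (T x)) ≤ (a + β) * GM.G x (T x) (T x) := by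
  set d := GM.G x (T x) (T x)
  set d' := GM.G (T x) (T (T x)) (T (T x))
  have h : d' ≤ a * d + β * max d d' := by simpa using hT x (T x) (T x)
  rcases le_total d' d with hle | hle
  · rw [max_eq_left hle] at h
    linarith
  · rw [max_eq_right hle] at h
    have hd : 0 ≤ d := GM.nonneg _ _ _
    have hd' : (1 - β) * d' ≤ a * d := by linarith
    -- `(1 - β)(a + β) d - a d = β (1 - a - β) d ≥ 0`
    have had : a * d ≤ (1 - β) * ((a + β) * d) := by
      nlinarith [mul_nonneg (mul_nonneg hβ (sub_nonneg.2 hab.le)) hd]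
    exact le_of_mul_le_mul_left (hd'.trans had) (by linarith)

theorem G_iterate_succ_le (hT : IsMaxContraction GM T a β) (ha : 0 ≤ a) (hβ : 0 ≤ β)
    (hab : a + β < 1) (x₀ : X) (n : ℕ) :
    GM.G (T^[n] x₀) (T^[n + 1] x₀) (T^[n + 1] x₀) ≤ GM.G x₀ (T x₀) (T x₀) * (a + β) ^ n := by
  induction n with
  | zero => simp
  | succ n ih =>
    rw [iterate_succ_apply' T (n + 1), iterate_succ_apply' T n] at *
    calc _ ≤ (a + β) * GM.G (T^[n] x₀) (T (T^[n] x₀)) (T (T^[n] x₀)) := hT.G_apply_le ha hβ hab _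
      _ ≤ (a + β) * (GM.G x₀ (T x₀) (T x₀) * (a + β) ^ n) := by gcongr
      _ = _ := by ring

theorem isFixedPt_of_gConvergesTo (hT : IsMaxContraction GM T a β) (hβ1 : β < 1) {x : ℕ → X}
    (hx : ∀ n, x (n + 1) = T (x n)) {u : X} (hu : GConvergesTo GM x u) : IsFixedPt T u := by
  set c := GM.G u (T u) (T u)
  have hbound : ∀ n, c ≤ GM.G u (x (n + 1)) (x (n + 1)) +
      (a * GM.G (x n) u u + β * max (GM.G (x n) (x (n + 1)) (x (n + 1))) (max c c)) := fun n => by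
    rw [hx]
    linarith [GM.rect u (T u) (T u) (T (x n)), hT (x n) u u]
  have hlim : Tendsto (fun n => GM.G u (x (n + 1)) (x (n + 1)) +
      (a * GM.G (x n) u u + β * max (GM.G (x n) (x (n + 1)) (x (n + 1))) (max c c))) atTop
      (𝓝 (0 + (a * 0 + β * max 0 (max c c)))) :=
    (hu.tendsto_G_lim_seq_seq.comp (tendsto_add_atTop_nat 1)).add
      ((hu.tendsto_G_seq_lim_lim.const_mul a).add
        ((hu.tendsto_G_succ.max tendsto_const_nhds).const_mul β))
  have hc_nonneg : 0 ≤ c := GM.nonneg _ _ _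
  have hc : c ≤ β * c := by
    simpa [max_eq_right hc_nonneg] using
      ge_of_tendsto hlim (Eventually.of_forall hbound)
  have hc0 : c = 0 := le_antisymm (by nlinarith) hc_nonneg
  exact (GM.eq_of_G_xyy_eq_zero hc0).symm

theorem eq_of_isFixedPt (hT : IsMaxContraction GM T a β) (ha1 : a < 1) {u v : X}
    (hv : IsFixedPt T v) (hu : IsFixedPt T u) : v = u := by
  have h := hT v u u
  simp only [hv.eq, hu.eq, G_self, max_self, mul_zero, add_zero] at h
  exact GM.eq_of_G_xyy_eq_zero (le_antisymm (by nlinarith [GM.nonneg v u u]) (GM.nonneg _ _ _))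

theorem gContinuousAt_of_isFixedPt (hT : IsMaxContraction GM T a β) (hβ : 0 ≤ β) (hβ1 : β < 1)
    {u : X} (hu : IsFixedPt T u) : GContinuousAt GM T u := by
  intro y hy
  have hβ1' : 0 < 1 - β := sub_pos.2 hβ1
  have hbound : ∀ n, GM.G (T (y n)) (T (y n)) u ≤ (a + 2 * β) / (1 - β) * GM.G (y n) (y n) u :=
    fun n => by
      have h := hT (y n) (y n) u
      simp only [hu.eq, G_self, max_self, max_eq_left (GM.nonneg _ _ _)] at h
      have hstep : GM.G (y n) (T (y n)) (T (y n)) ≤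
          2 * GM.G (y n) (y n) u + GM.G (T (y n)) (T (y n)) u := by
        have := GM.rect (y n) (T (y n)) (T (y n)) u
        rw [GM.symm_cycle u] at this
        linarith [GM.G_xyy_le_two_mul_G_xxy (y n) u]
      rw [div_mul_eq_mul_div, le_div_iff₀ hβ1']
      nlinarith [mul_le_mul_of_nonneg_left hstep hβ]
  show Tendsto (fun n => GM.G (T (y n)) (T (y n)) (T u)) atTop (𝓝 0)
  rw [hu.eq]
  exact squeeze_zero (fun n => GM.nonneg _ _ _) hbound (by simpa using hy.const_mul _)

end IsMaxContraction

theorem fixed_point_max_form {X : Type*} [Nonempty X] (GM : GMetricStruct X)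
    (hcomp : GComplete GM) (T : X → X)
    (a β : ℝ) (ha : 0 ≤ a) (hβ : 0 ≤ β) (hab : a + β < 1)
    (hT : ∀ x y z : X, GM.G (T x) (T y) (T z) ≤
      a * GM.G x y z + β * max (GM.G x (T x) (T x))
        (max (GM.G y (T y) (T y)) (GM.G z (T z) (T z)))) :
    ∃ u : X, T u = u ∧ (∀ v : X, T v = v → v = u) ∧ GContinuousAt GM T u := by
  have hT : IsMaxContraction GM T a β := hT
  obtain ⟨x₀⟩ := ‹Nonempty X›
  obtain ⟨u, hu⟩ := hcomp _ (gCauchySeq_of_G_succ_le_geometric (add_nonneg ha hβ) hab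
    (hT.G_iterate_succ_le ha hβ hab x₀))
  have hfix : IsFixedPt T u :=
    hT.isFixedPt_of_gConvergesTo (by linarith) (fun n => iterate_succ_apply' T n x₀) hu
  exact ⟨u, hfix, fun v hv => hT.eq_of_isFixedPt (by linarith) hv hfix,
    hT.gContinuousAt_of_isFixedPt hβ (by linarith) hfix⟩
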